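/- In the shot-noise Cox process setup, the Laplace functional of Φ is, for every measurable f : X → [0,∞): E[exp(−Φ(f))] = exp(−∫_{X×(0,∞)} (1 − exp(−γ ∫_X (1 − e^{−f(x)}) κ(x; θ) μ(dx))) ν(dθ, dγ)). -/
import Mathlib


open MeasureTheory Filter Topology

/-- `expNeg t = e^{-t}` for `t ∈ [0,∞]`, with `expNeg ∞ = 0`. -/
noncomputable def expNeg (t : ENNReal) : ENNReal :=
  if t = ⊤ then 0 else ENNReal.ofReal (Real.exp (-t.toReal))

lemma measurable_expNeg : Measurable expNeg := by
  unfold expNeg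
  apply Measurable.ite (measurableSet_singleton ⊤) measurable_const
  exact ENNReal.measurable_ofReal.comp
    (Real.measurable_exp.comp (measurable_neg.comp ENNReal.measurable_toReal))

lemma expNeg_le_one (t : ENNReal) : expNeg t ≤ 1 := by
  unfold expNeg
  split
  · exact zero_le_one
  · refine ENNReal.ofReal_le_one.mpr (Real.exp_le_one_iff.mpr ?_)
    simp [ENNReal.toReal_nonneg]

lemma one_sub_expNeg_le (t : ENNReal) : 1 - expNeg t ≤ t := by
  by_cases ht : t = ⊤
  · simp [ht]
  · unfold expNeg
    rw [if_neg ht]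
    have hs : (0:ℝ) ≤ t.toReal := ENNReal.toReal_nonneg
    have h1 : (1:ENNReal) = ENNReal.ofReal 1 := by simp
    rw [h1, ← ENNReal.ofReal_sub _ (Real.exp_nonneg _)]
    calc ENNReal.ofReal (1 - Real.exp (-t.toReal))
        ≤ ENNReal.ofReal t.toReal := by
          apply ENNReal.ofReal_le_ofReal
          have := Real.add_one_le_exp (-t.toReal)
          linarith
      _ = t := ENNReal.ofReal_toReal ht

lemma sigmaFinite_of_lintegral_ne_top {α : Type*} [MeasurableSpace α]
    (ρ : Measure α) (h : α → ENNReal) (hm : Measurable h)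
    (h0 : ∀ x, h x ≠ 0) (ht : ∀ x, h x ≠ ⊤) (hfin : ∫⁻ x, h x ∂ρ ≠ ⊤) :
    SigmaFinite ρ := by
  have hfm : IsFiniteMeasure (ρ.withDensity h) := by
    constructor
    rw [withDensity_apply _ MeasurableSet.univ, setLIntegral_univ]
    exact hfin.lt_top
  have heq := withDensity_inv_same (μ := ρ) hm (ae_of_all _ h0) (ae_of_all _ ht)
  rw [← heq]
  exact SigmaFinite.withDensity_of_ne_top' fun x => ENNReal.inv_ne_top.mpr (h0 x)

/-- Laplace functional of a shot-noise Cox process.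
In the shot-noise Cox process setup (marks `γ ∈ (0,∞)` modelled in `ℝ≥0` with
`ν`-null zero section), the Laplace functional of `Φ` is
`E[e^{−Φ(f)}] = exp(−∫ (1 − exp(−γ ∫ (1−e^{−f(x)}) κ(x;θ) μ(dx))) ν(dθ,dγ))`. -/
theorem sncp_laplace_functional
    {Ω X : Type*} [MeasurableSpace Ω] [MeasurableSpace X]
    (P : Measure Ω) [IsProbabilityMeasure P]
    (μ : Measure X) [SigmaFinite μ]
    (ν : Measure (X × NNReal)) [SigmaFinite ν] (hν0 : ν {z | z.2 = 0} = 0)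
    (κ : X → X → ENNReal) (hκ : Measurable (Function.uncurry κ))
    (hκ1 : ∀ θ : X, ∫⁻ x, κ x θ ∂μ = 1)
    (Λ : Ω → Measure (X × NNReal)) (hΛmeas : Measurable Λ)
    -- Poisson Laplace functional of the directing process `Λ`
    (hΛ : ∀ h : X × NNReal → ENNReal, Measurable h →
      ∫⁻ ω, expNeg (∫⁻ z, h z ∂(Λ ω)) ∂P = expNeg (∫⁻ z, (1 - expNeg (h z)) ∂ν))
    -- the shot-noise field `T_Λ(x) = ∫ γ κ(x;θ) Λ(dθ,dγ)` is a.s. finite `μ`-a.e.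
    (hTfin : ∀ᵐ ω ∂P, ∀ᵐ x ∂μ, (∫⁻ z, (z.2 : ENNReal) * κ x z.1 ∂(Λ ω)) ≠ ⊤)
    (Φ : Ω → Measure X) (hΦmeas : Measurable Φ)
    -- `Φ` is conditionally Poisson given `Λ`, with intensity `T_Λ · μ`
    (hcond : ∀ f : X → ENNReal, Measurable f →
      ∀ G : Measure (X × NNReal) → ENNReal, Measurable G →
      ∫⁻ ω, expNeg (∫⁻ x, f x ∂(Φ ω)) * G (Λ ω) ∂P
        = ∫⁻ ω, expNeg (∫⁻ x, (1 - expNeg (f x))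
            * (∫⁻ z, (z.2 : ENNReal) * κ x z.1 ∂(Λ ω)) ∂μ) * G (Λ ω) ∂P) :
    ∀ f : X → ENNReal, Measurable f →
      ∫⁻ ω, expNeg (∫⁻ x, f x ∂(Φ ω)) ∂P
        = expNeg (∫⁻ z, (1 - expNeg ((z.2 : ENNReal)
            * ∫⁻ x, (1 - expNeg (f x)) * κ x z.1 ∂μ)) ∂ν) := by
  intro f hf
  set g : X → ENNReal := fun x => 1 - expNeg (f x) with hg
  have hgm : Measurable g := measurable_const.sub (measurable_expNeg.comp hf)
  set H : X × NNReal → ENNReal :=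
    fun z => (z.2 : ENNReal) * ∫⁻ x, g x * κ x z.1 ∂μ with hH
  have hFm : Measurable (fun p : X × (X × NNReal) =>
      g p.1 * ((p.2.2 : ENNReal) * κ p.1 p.2.1)) := by
    apply Measurable.mul (hgm.comp measurable_fst)
    apply Measurable.mul
    · exact measurable_coe_nnreal_ennreal.comp
        (measurable_snd.comp measurable_snd)
    · exact hκ.comp (measurable_fst.prodMk (measurable_fst.comp measurable_snd))
  have hHm : Measurable H := by
    apply Measurable.mul (measurable_coe_nnreal_ennreal.comp measurable_snd)
    have : Measurable (fun p : (X × NNReal) × X => g p.2 * κ p.2 p.1.1) := by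
      apply Measurable.mul (hgm.comp measurable_snd)
      exact hκ.comp (measurable_snd.prodMk (measurable_fst.comp measurable_fst))
    exact this.lintegral_prod_right'
  have key := hcond f hf (fun _ => 1) measurable_const
  simp only [mul_one] at key
  rw [key]
  -- the swap identity, valid for σ-finite `Λ ω`
  have swap : ∀ ω : Ω, SigmaFinite (Λ ω) →
      ∫⁻ x, g x * (∫⁻ z, (z.2 : ENNReal) * κ x z.1 ∂(Λ ω)) ∂μ
        = ∫⁻ z, H z ∂(Λ ω) := by
    intro ω hσ
    haveI := hσ
    calc ∫⁻ x, g x * (∫⁻ z, (z.2 : ENNReal) * κ x z.1 ∂(Λ ω)) ∂μ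
        = ∫⁻ x, ∫⁻ z, g x * ((z.2 : ENNReal) * κ x z.1) ∂(Λ ω) ∂μ := by
          refine lintegral_congr fun x => ?_
          rw [lintegral_const_mul]
          exact (measurable_coe_nnreal_ennreal.comp measurable_snd).mul
            (hκ.comp (measurable_const.prodMk measurable_fst))
      _ = ∫⁻ z, ∫⁻ x, g x * ((z.2 : ENNReal) * κ x z.1) ∂μ ∂(Λ ω) :=
          lintegral_lintegral_swap hFm.aemeasurable
      _ = ∫⁻ z, H z ∂(Λ ω) := by
          refine lintegral_congr fun z => ?_
          simp only [hH]
          rw [← lintegral_const_mul]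
          · exact lintegral_congr fun x => by ring
          · exact hgm.mul (hκ.comp (measurable_id.prodMk measurable_const))
  -- a.e. σ-finiteness of `Λ ω`, from the Poisson Laplace functional
  obtain ⟨w, wpos, wmeas, wlt⟩ :=
    exists_pos_lintegral_lt_of_sigmaFinite ν (one_ne_zero (α := ENNReal))
  set W : X × NNReal → ENNReal := fun z => (w z : ENNReal) with hW
  have hWm : Measurable W := measurable_coe_nnreal_ennreal.comp wmeas
  set C : ENNReal := ∫⁻ z, W z ∂ν with hCdef
  have hC : C ≠ ⊤ := (wlt.trans ENNReal.one_lt_top).ne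
  have hLim : Measurable fun ω => ∫⁻ z, W z ∂(Λ ω) :=
    (Measure.measurable_lintegral hWm).comp hΛmeas
  set S : Set Ω := {ω | (∫⁻ z, W z ∂(Λ ω)) = ⊤} with hSdef
  have hSmeas : MeasurableSet S := hLim (measurableSet_singleton ⊤)
  have hPS : ∀ n : ℕ, P S ≤ C * (((n : ENNReal) + 1))⁻¹ := by
    intro n
    set a : ENNReal := (((n : ENNReal) + 1))⁻¹ with ha
    have ha0 : a ≠ 0 := by
      rw [ha]
      exact ENNReal.inv_ne_zero.mpr
        (ENNReal.add_ne_top.mpr ⟨ENNReal.natCast_ne_top n, ENNReal.one_ne_top⟩)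
    have hhn : Measurable fun z => W z * a := hWm.mul_const a
    have laplace := hΛ (fun z => W z * a) hhn
    set u : Ω → ENNReal := fun ω => expNeg (∫⁻ z, W z * a ∂(Λ ω)) with hu
    have hum : Measurable u :=
      measurable_expNeg.comp ((Measure.measurable_lintegral hhn).comp hΛmeas)
    have hind : P S ≤ ∫⁻ ω, (1 - u ω) ∂P := by
      rw [← lintegral_indicator_one hSmeas]
      refine lintegral_mono fun ω => ?_
      by_cases hω : ω ∈ S
      · have h1 : (∫⁻ z, W z * a ∂(Λ ω)) = ⊤ := by
          rw [lintegral_mul_const a hWm, hω, ENNReal.top_mul ha0]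
        have h2 : u ω = 0 := by simp [hu, h1, expNeg]
        simp [Set.indicator_of_mem hω, h2]
      · simp [Set.indicator_of_notMem hω]
    have hsum : (∫⁻ ω, (1 - u ω) ∂P) + (∫⁻ ω, u ω ∂P) = 1 := by
      rw [← lintegral_add_right _ hum]
      have : ∀ ω, (1 - u ω) + u ω = 1 := fun ω =>
        tsub_add_cancel_of_le (expNeg_le_one _)
      simp only [this, lintegral_one, measure_univ]
    have hone : (∫⁻ ω, (1 - u ω) ∂P)
        = 1 - expNeg (∫⁻ z, (1 - expNeg (W z * a)) ∂ν) := by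
      rw [← laplace]
      exact ENNReal.eq_sub_of_add_eq
        (((lintegral_mono fun ω => expNeg_le_one _).trans_lt
          (by simp [lintegral_one])).ne) hsum
    have hcn : (∫⁻ z, (1 - expNeg (W z * a)) ∂ν) ≤ C * a := by
      calc (∫⁻ z, (1 - expNeg (W z * a)) ∂ν)
          ≤ ∫⁻ z, W z * a ∂ν := lintegral_mono fun z => one_sub_expNeg_le _
        _ = C * a := lintegral_mul_const a hWm
    calc P S ≤ ∫⁻ ω, (1 - u ω) ∂P := hind
      _ = 1 - expNeg (∫⁻ z, (1 - expNeg (W z * a)) ∂ν) := hone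
      _ ≤ ∫⁻ z, (1 - expNeg (W z * a)) ∂ν := one_sub_expNeg_le _
      _ ≤ C * a := hcn
  have hPS0 : P S = 0 := by
    have h1 : Tendsto (fun n : ℕ => ((n : ENNReal) + 1)⁻¹) atTop (𝓝 0) := by
      have h := ENNReal.tendsto_inv_nat_nhds_zero.comp (tendsto_add_atTop_nat 1)
      refine h.congr fun n => ?_
      simp
    have h2 : Tendsto (fun n : ℕ => C * ((n : ENNReal) + 1)⁻¹) atTop (𝓝 0) := by
      simpa using ENNReal.Tendsto.const_mul h1 (Or.inr hC)
    exact nonpos_iff_eq_zero.mp (ge_of_tendsto' h2 hPS)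
  have hae : ∀ᵐ ω ∂P, ω ∉ S := measure_eq_zero_iff_ae_notMem.mp hPS0
  have hswap_ae : ∀ᵐ ω ∂P,
      expNeg (∫⁻ x, g x * (∫⁻ z, (z.2 : ENNReal) * κ x z.1 ∂(Λ ω)) ∂μ)
        = expNeg (∫⁻ z, H z ∂(Λ ω)) := by
    filter_upwards [hae] with ω hω
    have hσ : SigmaFinite (Λ ω) := by
      refine sigmaFinite_of_lintegral_ne_top (Λ ω) W hWm
        (fun z => by simp [hW]; exact (wpos z).ne') (fun z => by simp [hW]) hω
    rw [swap ω hσ]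
  rw [lintegral_congr_ae hswap_ae]
  exact hΛ H hHm
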